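/- Let T be the operator (Tf)(x) = f(1/(2−x))/(2−x)² − f(1/(1+x))/(1+x)² and T_+ the operator (T_+f)(x) = f(1/(2−x))/(2−x)² + f(1/(1+x))/(1+x)² on C[1/2,1]. Let ψ_n = (T_+)^n 1 (with ψ_0 ≡ 1). Then for every n ≥ 1 and x ∈ [1/2,1]: ψ_n(x) = Σ_{p/q ∈ W_n} ( 1/(q−px)² + 1/(q−p(1−x))² ), where W_n is the n-th layer of new Stern-Brocot fractions in lowest terms. -/

import Mathlib

/-- The mediant of two rationals, formed from numerators and denominators
of the reduced fractions. -/
def mediant (a b : ℚ) : ℚ := ((a.num + b.num : ℤ) : ℚ) / ((a.den + b.den : ℕ) : ℚ)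

/-- `sb n j` is the `j`-th element `ξ_{j,n}` of the Stern–Brocot sequence `F_n`:
`F_0 = {0/1, 1/1}` and `F_{n+1}` is obtained from `F_n` by inserting the mediant
between every pair of consecutive elements. -/
def sb : ℕ → ℕ → ℚ
  | 0, j => if j = 0 then 0 else 1
  | n + 1, j => if j % 2 = 0 then sb n (j / 2) else mediant (sb n (j / 2)) (sb n (j / 2 + 1))

/-- `sbNew n` is the set `W_n` of new fractions inserted at step `n` of the
Stern–Brocot construction (the elements of odd index in `F_n`). -/
def sbNew (n : ℕ) : Finset ℚ :=
  ((Finset.range (2 ^ n)).filter (fun j => j % 2 = 1)).image (sb n)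

/-- The operator `T₊` on functions on `[1/2,1]`:
`(T₊f)(x) = f(1/(2−x))/(2−x)² + f(1/(1+x))/(1+x)²`. -/
noncomputable def Tplus (f : ℝ → ℝ) : ℝ → ℝ := fun x =>
  f (1 / (2 - x)) / (2 - x) ^ 2 + f (1 / (1 + x)) / (1 + x) ^ 2

/-!
The maps `r ↦ 1/(2 - r)` and `r ↦ (1 - r)/(2 - r)` are Möbius maps with integer matrices of
determinant `±1`, so they send a reduced fraction `p/q` to the reduced fractions `q/(2q - p)` and
`(q - p)/(2q - p)`, and they commute with taking mediants. Hence `W_{n+1}` is the disjoint union of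
the images of `W_n`, one in `(1/2, 1]` and one in `[0, 1/2)`. On the other hand, substituting
`1/(2 - x)` and `1/(1 + x)` into `1/(q - p x)² + 1/(q - p (1 - x))²` and multiplying by the
Jacobians `1/(2 - x)²`, `1/(1 + x)²` gives exactly the sum of the same expressions for these two
fractions; the formula follows by induction on `n`, starting from `W_1 = {1/2}`.
-/

def mobius (α β γ δ : ℤ) (r : ℚ) : ℚ := (α * r + β) / (γ * r + δ : ℚ)

section Mobius

variable {α β γ δ : ℤ}

lemma Rat.num_den_div_of_isCoprime {a b : ℤ} (hb : 0 < b) (h : IsCoprime a b) :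
    (a / b : ℚ).num = a ∧ ((a / b : ℚ).den : ℤ) = b :=
  have h' := Int.isCoprime_iff_gcd_eq_one.mp h
  ⟨Rat.num_div_eq_of_coprime hb h', Rat.den_div_eq_of_coprime hb h'⟩

lemma IsCoprime.mobius {p q : ℤ} (hdet : IsUnit (α * δ - β * γ)) (h : IsCoprime p q) :
    IsCoprime (α * p + β * q) (γ * p + δ * q) := by
  obtain ⟨u, v, huv⟩ := h
  obtain ⟨e, he⟩ := hdet.exists_left_inv
  exact ⟨e * (u * δ - v * γ), e * (v * α - u * β), by
    linear_combination e * (α * δ - β * γ) * huv + he⟩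

lemma mul_div_add_eq_div {s t p q : ℚ} (hq : q ≠ 0) : s * (p / q) + t = (s * p + t * q) / q := by
  rw [← mul_div_assoc, div_add' _ _ _ hq]

lemma mobius_div {p q : ℤ} (hq : q ≠ 0) :
    mobius α β γ δ (p / q) = ((α * p + β * q : ℤ) : ℚ) / ((γ * p + δ * q : ℤ) : ℚ) := by
  have hq' : (q : ℚ) ≠ 0 := by exact_mod_cast hq
  rw [mobius, mul_div_add_eq_div hq', mul_div_add_eq_div hq', div_div_div_cancel_right₀ hq']
  push_cast; rfl

lemma mobius_num_den (hdet : IsUnit (α * δ - β * γ)) {r : ℚ} (hr : 0 < (γ * r + δ : ℚ)) :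
    (mobius α β γ δ r).num = α * r.num + β * r.den ∧
      ((mobius α β γ δ r).den : ℤ) = γ * r.num + δ * r.den := by
  have hq : ((r.den : ℤ) : ℚ) ≠ 0 := by positivity
  have hpos : 0 < γ * r.num + δ * r.den := by
    rw [← Rat.num_div_den r, ← Int.cast_natCast, mul_div_add_eq_div hq] at hr
    exact_mod_cast (div_pos_iff_of_pos_right (by positivity)).mp hr
  have := mobius_div (α := α) (β := β) (γ := γ) (δ := δ) (p := r.num) (q := r.den) (by positivity)
  rw [Int.cast_natCast, Rat.num_div_den] at this
  rw [this]
  exact Rat.num_den_div_of_isCoprime hpos ((Rat.isCoprime_num_den r).mobius hdet)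

lemma mobius_mediant (hdet : IsUnit (α * δ - β * γ)) {a b : ℚ} (ha : 0 < (γ * a + δ : ℚ))
    (hb : 0 < (γ * b + δ : ℚ)) :
    mobius α β γ δ (mediant a b) = mediant (mobius α β γ δ a) (mobius α β γ δ b) := by
  obtain ⟨han, had⟩ := mobius_num_den hdet ha
  obtain ⟨hbn, hbd⟩ := mobius_num_den hdet hb
  have := mobius_div (α := α) (β := β) (γ := γ) (δ := δ) (p := a.num + b.num)
    (q := ((a.den + b.den : ℕ) : ℤ)) (by positivity)
  rw [mediant, mediant, han, hbn, ← Int.cast_natCast, this]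
  have hden : ((mobius α β γ δ a).den + (mobius α β γ δ b).den : ℕ) =
      γ * (a.num + b.num) + δ * ((a.den + b.den : ℕ) : ℤ) := by
    push_cast [had, hbd]; ring
  rw [← Int.cast_natCast ((mobius α β γ δ a).den + (mobius α β γ δ b).den), hden]
  congr 2; push_cast; ring

lemma mobius_injOn (hdet : α * δ - β * γ ≠ 0) :
    Set.InjOn (mobius α β γ δ) {r | (γ * r + δ : ℚ) ≠ 0} := by
  intro a ha b hb h
  rw [mobius, mobius, div_eq_div_iff ha hb] at h
  have : ((α * δ - β * γ : ℤ) : ℚ) * (a - b) = 0 := by push_cast; linear_combination h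
  exact sub_eq_zero.mp ((mul_eq_zero.mp this).resolve_left (by exact_mod_cast hdet))

end Mobius

section Mediant

variable {a b : ℚ}

lemma mediant_comm (a b : ℚ) : mediant a b = mediant b a := by
  rw [mediant, mediant, add_comm a.num, add_comm a.den]

lemma mediant_pos (ha : 0 ≤ a) (hb : 0 < b) : 0 < mediant a b := by
  have : 0 < a.num + b.num := add_pos_of_nonneg_of_pos (Rat.num_nonneg.mpr ha) (Rat.num_pos.mpr hb)
  unfold mediant
  positivity

lemma Rat.num_le_den_of_le_one {r : ℚ} (h : r ≤ 1) : r.num ≤ r.den := by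
  rw [← Rat.num_div_den r, div_le_one (by positivity)] at h
  exact_mod_cast h

lemma mediant_le_one (ha : a ≤ 1) (hb : b ≤ 1) : mediant a b ≤ 1 := by
  have h : a.num + b.num ≤ ((a.den + b.den : ℕ) : ℤ) := by
    push_cast
    exact add_le_add (Rat.num_le_den_of_le_one ha) (Rat.num_le_den_of_le_one hb)
  rw [mediant, div_le_one (by positivity)]
  exact_mod_cast h

end Mediant

-- `sbRight r = 1/(2 - r)` and `sbLeft r = (1 - r)/(2 - r)`.
def sbRight : ℚ → ℚ := mobius 0 1 (-1) 2

def sbLeft : ℚ → ℚ := mobius (-1) 1 (-1) 2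

section StepMaps

variable {r a b : ℚ}

lemma two_sub_pos (h : r ≤ 1) : 0 < (((-1 : ℤ) : ℚ) * r + ((2 : ℤ) : ℚ)) := by
  push_cast; linarith

lemma sbRight_mediant (ha : a ≤ 1) (hb : b ≤ 1) :
    sbRight (mediant a b) = mediant (sbRight a) (sbRight b) :=
  mobius_mediant (by decide) (two_sub_pos ha) (two_sub_pos hb)

lemma sbLeft_mediant (ha : a ≤ 1) (hb : b ≤ 1) :
    sbLeft (mediant a b) = mediant (sbLeft b) (sbLeft a) := by
  rw [mediant_comm]
  exact mobius_mediant (by decide) (two_sub_pos hb) (two_sub_pos ha)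

lemma half_lt_sbRight (h0 : 0 < r) (h1 : r ≤ 1) : 1 / 2 < sbRight r := by
  rw [sbRight, mobius, lt_div_iff₀ (two_sub_pos h1)]
  push_cast; linarith

lemma sbLeft_lt_half (h0 : 0 < r) (h1 : r ≤ 1) : sbLeft r < 1 / 2 := by
  rw [sbLeft, mobius, div_lt_iff₀ (two_sub_pos h1)]
  push_cast; linarith

lemma sbRight_injOn : Set.InjOn sbRight (Set.Iic 1) :=
  (mobius_injOn (by decide)).mono fun _ hr => (two_sub_pos hr).ne'

lemma sbLeft_injOn : Set.InjOn sbLeft (Set.Iic 1) :=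
  (mobius_injOn (by decide)).mono fun _ hr => (two_sub_pos hr).ne'

end StepMaps

section SternBrocot

lemma sb_succ_two_mul (n k : ℕ) : sb (n + 1) (2 * k) = sb n k := by
  simp [sb]

lemma sb_succ_two_mul_add_one (n k : ℕ) :
    sb (n + 1) (2 * k + 1) = mediant (sb n k) (sb n (k + 1)) := by
  rw [sb, if_neg (by omega), show (2 * k + 1) / 2 = k by omega]

lemma sb_zero (n : ℕ) : sb n 0 = 0 := by
  induction n with
  | zero => rfl
  | succ n ih => simpa [sb] using ih

lemma sb_pos : ∀ n {j : ℕ}, 0 < j → 0 < sb n j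
  | 0, j, hj => by simp [sb, hj.ne']
  | n + 1, j, hj => by
    obtain ⟨k, rfl | rfl⟩ := Nat.even_or_odd' j
    · rw [sb_succ_two_mul]; exact sb_pos n (by omega)
    · rw [sb_succ_two_mul_add_one]
      refine mediant_pos ?_ (sb_pos n k.succ_pos)
      rcases k.eq_zero_or_pos with rfl | hk
      · exact (sb_zero n).ge
      · exact (sb_pos n hk).le

lemma sb_le_one : ∀ n j, sb n j ≤ 1
  | 0, j => by by_cases h : j = 0 <;> simp [sb, h]
  | n + 1, j => by
    obtain ⟨k, rfl | rfl⟩ := Nat.even_or_odd' j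
    · rw [sb_succ_two_mul]; exact sb_le_one n k
    · rw [sb_succ_two_mul_add_one]; exact mediant_le_one (sb_le_one n k) (sb_le_one n (k + 1))

lemma sb_succ_pow_add : ∀ n {j : ℕ}, j ≤ 2 ^ n → sb (n + 1) (2 ^ n + j) = sbRight (sb n j)
  | 0, j, hj => by interval_cases j <;> norm_num [sb, sbRight, mobius, mediant]
  | n + 1, j, hj => by
    obtain ⟨k, rfl | rfl⟩ := Nat.even_or_odd' j
    · rw [pow_succ, show 2 ^ n * 2 + 2 * k = 2 * (2 ^ n + k) by ring, sb_succ_two_mul,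
        sb_succ_two_mul, sb_succ_pow_add n (by rw [pow_succ] at hj; omega)]
    · rw [pow_succ, show 2 ^ n * 2 + (2 * k + 1) = 2 * (2 ^ n + k) + 1 by ring,
        sb_succ_two_mul_add_one, sb_succ_two_mul_add_one, add_assoc,
        sb_succ_pow_add n (j := k) (by rw [pow_succ] at hj; omega),
        sb_succ_pow_add n (j := k + 1) (by rw [pow_succ] at hj; omega),
        sbRight_mediant (sb_le_one n k) (sb_le_one n (k + 1))]

lemma sb_succ_pow_sub : ∀ n {j : ℕ}, j ≤ 2 ^ n → sb (n + 1) (2 ^ n - j) = sbLeft (sb n j)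
  | 0, j, hj => by interval_cases j <;> norm_num [sb, sbLeft, mobius, mediant]
  | n + 1, j, hj => by
    obtain ⟨k, rfl | rfl⟩ := Nat.even_or_odd' j
    · rw [pow_succ, show 2 ^ n * 2 - 2 * k = 2 * (2 ^ n - k) by omega, sb_succ_two_mul,
        sb_succ_two_mul, sb_succ_pow_sub n (by rw [pow_succ] at hj; omega)]
    · have hk : k + 1 ≤ 2 ^ n := by rw [pow_succ] at hj; omega
      rw [pow_succ, show 2 ^ n * 2 - (2 * k + 1) = 2 * (2 ^ n - (k + 1)) + 1 by omega,
        sb_succ_two_mul_add_one, sb_succ_two_mul_add_one,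
        show 2 ^ n - (k + 1) + 1 = 2 ^ n - k by omega,
        sb_succ_pow_sub n hk, sb_succ_pow_sub n (j := k) (by omega),
        sbLeft_mediant (sb_le_one n k) (sb_le_one n (k + 1))]

end SternBrocot

lemma sbNew_one : sbNew 1 = {1 / 2} := by
  rw [sbNew, pow_one, show (Finset.range 2).filter (fun j => j % 2 = 1) = {1} by decide,
    Finset.image_singleton]
  norm_num [sb, mediant]

lemma mem_sbNew_Ioc {n : ℕ} {r : ℚ} (hr : r ∈ sbNew n) : r ∈ Set.Ioc 0 1 := by
  obtain ⟨j, hj, rfl⟩ := Finset.mem_image.mp hr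
  exact ⟨sb_pos n (Nat.odd_iff.mpr (Finset.mem_filter.mp hj).2).pos, sb_le_one n j⟩

lemma sbNew_succ {n : ℕ} (hn : 1 ≤ n) :
    sbNew (n + 1) = (sbNew n).image sbRight ∪ (sbNew n).image sbLeft := by
  have h2 : 2 ∣ 2 ^ n := dvd_pow_self 2 (by omega)
  have hpow : 2 ^ (n + 1) = 2 * 2 ^ n := pow_succ' 2 n
  ext s
  simp only [sbNew, Finset.mem_union, Finset.mem_image, Finset.mem_filter, Finset.mem_range]
  constructor
  · rintro ⟨j, ⟨hj, hodd⟩, rfl⟩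
    by_cases hjn : 2 ^ n ≤ j
    · refine Or.inl ⟨_, ⟨j - 2 ^ n, ⟨by omega, by omega⟩, rfl⟩, ?_⟩
      rw [← sb_succ_pow_add n (by omega), Nat.add_sub_cancel' hjn]
    · refine Or.inr ⟨_, ⟨2 ^ n - j, ⟨by omega, by omega⟩, rfl⟩, ?_⟩
      rw [← sb_succ_pow_sub n (by omega), Nat.sub_sub_self (by omega)]
  · rintro (⟨_, ⟨j, ⟨hj, hodd⟩, rfl⟩, rfl⟩ | ⟨_, ⟨j, ⟨hj, hodd⟩, rfl⟩, rfl⟩)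
    · exact ⟨2 ^ n + j, ⟨by omega, by omega⟩, sb_succ_pow_add n hj.le⟩
    · exact ⟨2 ^ n - j, ⟨by omega, by omega⟩, sb_succ_pow_sub n hj.le⟩

lemma sum_sbNew_succ {M : Type*} [AddCommMonoid M] (g : ℚ → M) {n : ℕ} (hn : 1 ≤ n) :
    ∑ r ∈ sbNew (n + 1), g r = ∑ r ∈ sbNew n, (g (sbRight r) + g (sbLeft r)) := by
  have hdisj : Disjoint ((sbNew n).image sbRight) ((sbNew n).image sbLeft) := by
    simp only [Finset.disjoint_left, Finset.mem_image]
    rintro _ ⟨a, ha, rfl⟩ ⟨b, hb, hab⟩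
    obtain ⟨ha0, ha1⟩ := mem_sbNew_Ioc ha
    obtain ⟨hb0, hb1⟩ := mem_sbNew_Ioc hb
    linarith [sbLeft_lt_half hb0 hb1, half_lt_sbRight ha0 ha1]
  rw [sbNew_succ hn, Finset.sum_union hdisj, Finset.sum_add_distrib,
    Finset.sum_image (sbRight_injOn.mono fun _ hr => (mem_sbNew_Ioc hr).2),
    Finset.sum_image (sbLeft_injOn.mono fun _ hr => (mem_sbNew_Ioc hr).2)]

noncomputable def sbTerm (p q : ℝ) (x : ℝ) : ℝ :=
  1 / (q - p * x) ^ 2 + 1 / (q - p * (1 - x)) ^ 2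

lemma sbTerm_one_div_div_sq (p q : ℝ) {E : ℝ} (hE : E ≠ 0) :
    sbTerm p q (1 / E) / E ^ 2 = 1 / (q * E - p) ^ 2 + 1 / ((q - p) * E + p) ^ 2 := by
  have h₁ : (q - p * (1 / E)) * E = q * E - p := by field_simp
  have h₂ : (q - p * (1 - 1 / E)) * E = (q - p) * E + p := by field_simp; ring
  rw [sbTerm, add_div, div_div, div_div, ← mul_pow, ← mul_pow, h₁, h₂]

lemma Tplus_sbTerm (p q : ℝ) {x : ℝ} (h₂ : 2 - x ≠ 0) (h₁ : 1 + x ≠ 0) :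
    Tplus (sbTerm p q) x = sbTerm q (2 * q - p) x + sbTerm (q - p) (2 * q - p) x := by
  rw [Tplus, sbTerm_one_div_div_sq p q h₂, sbTerm_one_div_div_sq p q h₁, sbTerm, sbTerm]
  ring

lemma Tplus_sbTerm_rat {r : ℚ} (hr : r ≤ 1) {x : ℝ} (h₂ : 2 - x ≠ 0) (h₁ : 1 + x ≠ 0) :
    Tplus (sbTerm r.num r.den) x =
      sbTerm (sbRight r).num (sbRight r).den x + sbTerm (sbLeft r).num (sbLeft r).den x := by
  obtain ⟨hRn, hRd⟩ := mobius_num_den (α := 0) (β := 1) (by decide) (two_sub_pos hr)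
  obtain ⟨hLn, hLd⟩ := mobius_num_den (α := -1) (β := 1) (by decide) (two_sub_pos hr)
  have hRn' : ((sbRight r).num : ℝ) = r.den := by rw [sbRight, hRn]; push_cast; ring
  have hLn' : ((sbLeft r).num : ℝ) = r.den - r.num := by rw [sbLeft, hLn]; push_cast; ring
  have hRd' : ((sbRight r).den : ℝ) = 2 * r.den - r.num := by
    rw [← Int.cast_natCast, sbRight, hRd]; push_cast; ring
  have hLd' : ((sbLeft r).den : ℝ) = 2 * r.den - r.num := by
    rw [← Int.cast_natCast, sbLeft, hLd]; push_cast; ring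
  rw [Tplus_sbTerm _ _ h₂ h₁, hRn', hRd', hLn', hLd']

lemma Tplus_finset_sum {ι : Type*} (s : Finset ι) (f : ι → ℝ → ℝ) (x : ℝ) :
    Tplus (fun y => ∑ i ∈ s, f i y) x = ∑ i ∈ s, Tplus (f i) x := by
  simp only [Tplus, Finset.sum_div, Finset.sum_add_distrib]

lemma one_div_two_sub_mem_Icc {x : ℝ} (hx : x ∈ Set.Icc (1 / 2 : ℝ) 1) :
    1 / (2 - x) ∈ Set.Icc (1 / 2 : ℝ) 1 := by
  obtain ⟨h₁, h₂⟩ := hx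
  constructor
  · rw [div_le_div_iff₀ two_pos (by linarith)]; linarith
  · rw [div_le_one (by linarith)]; linarith

lemma one_div_one_add_mem_Icc {x : ℝ} (hx : x ∈ Set.Icc (1 / 2 : ℝ) 1) :
    1 / (1 + x) ∈ Set.Icc (1 / 2 : ℝ) 1 := by
  obtain ⟨h₁, h₂⟩ := hx
  constructor
  · rw [div_le_div_iff₀ two_pos (by linarith)]; linarith
  · rw [div_le_one (by linarith)]; linarith

lemma Set.EqOn.Tplus {f g : ℝ → ℝ} (h : Set.EqOn f g (Set.Icc (1 / 2) 1)) :
    Set.EqOn (Tplus f) (Tplus g) (Set.Icc (1 / 2) 1) := fun x hx => by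
  rw [_root_.Tplus, _root_.Tplus, h (one_div_two_sub_mem_Icc hx), h (one_div_one_add_mem_Icc hx)]

lemma Tplus_iterate_one_eqOn {n : ℕ} (hn : 1 ≤ n) :
    Set.EqOn (Tplus^[n] fun _ => 1) (fun x => ∑ r ∈ sbNew n, sbTerm r.num r.den x)
      (Set.Icc (1 / 2) 1) := by
  induction n, hn using Nat.le_induction with
  | base =>
    intro x _
    have hnum : ((1 / 2 : ℚ).num : ℝ) = 1 := by norm_num
    have hden : ((1 / 2 : ℚ).den : ℝ) = 2 := by norm_num
    simp only [Function.iterate_one, sbNew_one, Finset.sum_singleton, hnum, hden, Tplus, sbTerm]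
    ring
  | succ n hn ih =>
    intro x hx
    have h₂ : 2 - x ≠ 0 := by linarith [hx.2]
    have h₁ : 1 + x ≠ 0 := by linarith [hx.1]
    rw [Function.iterate_succ_apply', ih.Tplus hx, Tplus_finset_sum]
    dsimp only
    rw [sum_sbNew_succ (fun r => sbTerm r.num r.den x) hn]
    exact Finset.sum_congr rfl fun r hr =>
      Tplus_sbTerm_rat (mem_sbNew_Ioc hr).2 h₂ h₁

/-- With `ψ_n = (T₊)^n 1`, for every `n ≥ 1` and `x ∈ [1/2,1]`:
`ψ_n(x) = Σ_{p/q ∈ W_n} ( 1/(q−px)² + 1/(q−p(1−x))² )`,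
where `W_n` is the `n`-th layer of new Stern–Brocot fractions in lowest terms. -/
theorem Tplus_iterate_one_eq (n : ℕ) (hn : 1 ≤ n) (x : ℝ)
    (hx : x ∈ Set.Icc (1 / 2 : ℝ) 1) :
    (Tplus^[n] (fun _ => 1)) x =
      ∑ r ∈ sbNew n,
        (1 / ((r.den : ℝ) - (r.num : ℝ) * x) ^ 2 +
          1 / ((r.den : ℝ) - (r.num : ℝ) * (1 - x)) ^ 2) :=
  Tplus_iterate_one_eqOn hn hx
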